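/- Let f : [0,1) → [0,1) be a bijection that is a piecewise translation with respect to a finite partition of [0,1) into half-open intervals (on each partition interval, f(x) = x + c for a constant c), and let s ∈ ℝ with 1/2 < s ≤ 1. Then there exist real numbers a < b with (a,b) ⊆ (0,s) and f((a,b)) ⊆ (0,s). -/

import Mathlib

/-!
An injective piecewise translation preserves Lebesgue measure, so `f '' [0, s)` has measure `s`; as
`s + s > 1`, it meets `[0, s)` inside `[0, 1)`. If `y ∈ [0, s)` has `f y ∈ [0, s)`, the translation
branch through `y` carries a short interval `(y, b)` into `(0, s)`.
-/

open Set MeasureTheory Function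

theorem exists_mem_Ico_castSucc_succ {β : Type*} [LinearOrder β] {n : ℕ} {x : Fin (n + 1) → β}
    {y : β} (hy : y ∈ Ico (x 0) (x (Fin.last n))) :
    ∃ j : Fin n, y ∈ Ico (x j.castSucc) (x j.succ) := by
  by_contra! h
  have hle : ∀ i, x i ≤ y := fun i =>
    Fin.induction hy.1 (fun j hj => not_lt.1 fun hlt => h j ⟨hj, hlt⟩) i
  exact (hle (Fin.last n)).not_gt hy.2

theorem Monotone.pairwise_disjoint_on_Ico_castSucc_succ {β : Type*} [Preorder β] {n : ℕ}
    {x : Fin (n + 1) → β} (hx : Monotone x) :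
    Pairwise (Disjoint on fun j : Fin n => Ico (x j.castSucc) (x j.succ)) :=
  (pairwise_disjoint_on _).2 fun _ _ hij =>
    disjoint_iff_inf_le.mpr fun _ ⟨⟨_, h₁⟩, ⟨h₂, _⟩⟩ =>
      h₁.not_ge <| (hx (Fin.succ_le_castSucc_iff.2 hij)).trans h₂

theorem measure_image_eq_of_injOn_of_eqOn_add {G ι : Type*} [MeasurableSpace G] [AddGroup G]
    [MeasurableAdd G] (μ : Measure G) [μ.IsAddRightInvariant] [Countable ι] {P : ι → Set G}
    {c : ι → G} {f : G → G} {A : Set G} (hP : ∀ i, MeasurableSet (P i))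
    (hPd : Pairwise (Disjoint on P)) (hA : MeasurableSet A) (hAP : A ⊆ ⋃ i, P i)
    (hf : InjOn f A) (hfP : ∀ i, EqOn f (· + c i) (P i)) :
    μ (f '' A) = μ A := by
  have hA_eq : A = ⋃ i, A ∩ P i := by rw [← inter_iUnion, inter_eq_left.2 hAP]
  have hpieces : ∀ i, f '' (A ∩ P i) = (· + -c i) ⁻¹' (A ∩ P i) := fun i => by
    rw [((hfP i).mono inter_subset_right).image_eq, image_add_right]
  have hdisj : Pairwise (Disjoint on fun i => A ∩ P i) :=
    fun i j hij => (hPd hij).mono inter_subset_right inter_subset_right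
  have hmeas : ∀ i, MeasurableSet (A ∩ P i) := fun i => hA.inter (hP i)
  calc μ (f '' A) = μ (⋃ i, f '' (A ∩ P i)) := by rw [← image_iUnion, ← hA_eq]
    _ = ∑' i, μ (A ∩ P i) := by
      rw [measure_iUnion (fun i j hij => (hdisj hij).image hf inter_subset_left inter_subset_left)
        (fun i => hpieces i ▸ (hmeas i).preimage (measurable_add_const _))]
      simp only [hpieces, measure_preimage_add_right]
    _ = μ A := by rw [← measure_iUnion hdisj hmeas, ← hA_eq]

theorem exists_Ioo_mapsTo_Ioo_of_eqOn_add {f : ℝ → ℝ} {c p q t s y : ℝ}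
    (hf : EqOn f (· + c) (Ico p q)) (hy : y ∈ Ico p q) (hyts : y ∈ Ico t s)
    (hfy : f y ∈ Ico t s) :
    ∃ a b : ℝ, a < b ∧ Ioo a b ⊆ Ioo t s ∧ f '' Ioo a b ⊆ Ioo t s := by
  rw [hf hy] at hfy
  refine ⟨y, min q (min s (s - c)), lt_min hy.2 (lt_min hyts.2 (by linarith [hfy.2])), ?_, ?_⟩
  · exact fun z hz => ⟨hyts.1.trans_lt hz.1, hz.2.trans_le ((min_le_right _ _).trans
      (min_le_left _ _))⟩
  · rintro _ ⟨z, hz, rfl⟩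
    have hzb := hz.2
    simp only [lt_min_iff] at hzb
    rw [hf ⟨hy.1.trans hz.1.le, hzb.1⟩]
    exact ⟨by linarith [hz.1, hfy.1], by linarith [hzb.2.2]⟩

theorem stmt_13 (n : ℕ) (x : Fin (n + 1) → ℝ) (hmono : StrictMono x)
    (h0 : x 0 = 0) (h1 : x (Fin.last n) = 1)
    (f : ℝ → ℝ) (hbij : Set.BijOn f (Set.Ico 0 1) (Set.Ico 0 1))
    (c : Fin n → ℝ)
    (htrans : ∀ j : Fin n, ∀ y ∈ Set.Ico (x j.castSucc) (x j.succ), f y = y + c j)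
    (s : ℝ) (hs1 : 1/2 < s) (hs2 : s ≤ 1) :
    ∃ a b : ℝ, a < b ∧ Set.Ioo a b ⊆ Set.Ioo 0 s ∧
      f '' Set.Ioo a b ⊆ Set.Ioo 0 s := by
  have hsub : Ico 0 s ⊆ Ico (0 : ℝ) 1 := Ico_subset_Ico_right hs2
  have hcover : Ico 0 s ⊆ ⋃ j : Fin n, Ico (x j.castSucc) (x j.succ) := fun y hy =>
    mem_iUnion.2 (exists_mem_Ico_castSucc_succ (x := x) (by rw [h0, h1]; exact hsub hy))
  have hvol : volume (f '' Ico 0 s) = volume (Ico 0 s) :=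
    measure_image_eq_of_injOn_of_eqOn_add volume (fun _ => measurableSet_Ico)
      hmono.monotone.pairwise_disjoint_on_Ico_castSucc_succ measurableSet_Ico hcover
      (hbij.injOn.mono hsub) fun j y hy => htrans j y hy
  obtain ⟨_, ⟨y, hy, rfl⟩, hfy⟩ : (f '' Ico 0 s ∩ Ico 0 s).Nonempty := by
    refine nonempty_inter_of_measure_lt_add volume measurableSet_Ico
      ((image_mono hsub).trans hbij.mapsTo.image_subset) hsub ?_
    rw [hvol, Real.volume_Ico, Real.volume_Ico, ← ENNReal.ofReal_add (by linarith) (by linarith),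
      ENNReal.ofReal_lt_ofReal_iff (by linarith)]
    linarith
  obtain ⟨j, hj⟩ := mem_iUnion.1 (hcover hy)
  exact exists_Ioo_mapsTo_Ioo_of_eqOn_add (fun z hz => htrans j z hz) hj hy hfy
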